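/- arXiv:2201.07086 — 3 statements merged into one kernel-verified Lean document; each statement's English description precedes it below -/
import Mathlib

section
/- The Nemytskii functional 𝓕 : L^{α'}(Ω;ℝ^d) → L¹(Ω), (𝓕(p))(x) = (ε/α')((1/ε)max{|p(x)|-w(x),0})^{α'}, is Gateaux differentiable with Gateaux derivative d𝓕(p;ψ) = ∫-free pointwise formula F(p)·ψ where F(p)(x) = ((|p(x)|-w(x))_+/ε)^{α'-1} p(x)/|p(x)|, and F maps L^{α'}(Ω;ℝ^d) into L^α(Ω;ℝ^d). -/
/-!
Pointwise, `t ↦ f(v + t u)` with `f(v) = (ε/α') ((‖v‖ - c)₊ / ε)^α'` is differentiable with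
derivative `⟪F(v + t u), u⟫`: for `v ≠ 0` by the chain rule, since `s ↦ s₊^α'` is differentiable
for `α' > 1`, and at `v = 0` because `f(t u) = O(|t|^α')`. As `‖F(v)‖ ≤ (‖v‖/ε)^(α'-1)`, the mean
value theorem dominates the difference quotients for `|t| ≤ 1` by
`2 ((‖p‖ + ‖ψ‖)/ε)^(α'-1) ‖ψ‖`, which is integrable by Hölder since `(α' - 1) α = α'`; dominated
convergence then gives convergence in `L¹`. The same bound on `F(p)` puts it in `L^α`.
-/

open MeasureTheory Filter
open scoped RealInnerProductSpace Topology

theorem hasDerivAt_zero_of_abs_le_rpow {f : ℝ → ℝ} {p C : ℝ} (hp : 1 < p)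
    (hf : ∀ t, |f t| ≤ C * |t| ^ p) : HasDerivAt f 0 0 := by
  have hf0 : f 0 = 0 := by
    simpa [Real.zero_rpow (by linarith : p ≠ 0)] using hf 0
  have hpow : HasDerivAt (fun t : ℝ => |t| ^ p) 0 0 := by
    simpa using hasDerivAt_abs_rpow 0 hp
  rw [hasDerivAt_iff_isLittleO_nhds_zero] at hpow ⊢
  refine Asymptotics.IsBigO.trans_isLittleO (.of_bound C (.of_forall fun t => ?_)) hpow
  simpa [hf0, Real.zero_rpow (by linarith : p ≠ 0), abs_of_nonneg (by positivity : 0 ≤ |t| ^ p)]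
    using hf t

theorem hasDerivAt_posPart_rpow {p : ℝ} (hp : 1 < p) (r : ℝ) :
    HasDerivAt (fun s => max s 0 ^ p) (p * max r 0 ^ (p - 1)) r := by
  rcases lt_trichotomy r 0 with hr | rfl | hr
  · have hzero : (fun s : ℝ => max s 0 ^ p) =ᶠ[𝓝 r] fun _ => 0 := by
      filter_upwards [Iio_mem_nhds hr] with s hs
      simp [max_eq_right (Set.mem_Iio.mp hs).le, Real.zero_rpow (by linarith : p ≠ 0)]
    simpa [max_eq_right hr.le, Real.zero_rpow (by linarith : p - 1 ≠ 0)]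
      using (hasDerivAt_const r (0 : ℝ)).congr_of_eventuallyEq hzero
  · simp only [max_self, Real.zero_rpow (by linarith : p - 1 ≠ 0), mul_zero]
    refine hasDerivAt_zero_of_abs_le_rpow hp (C := 1) fun s => ?_
    rw [one_mul, abs_of_nonneg (by positivity)]
    exact Real.rpow_le_rpow (le_max_right _ _) (max_le (le_abs_self s) (abs_nonneg s))
      (by linarith)
  · have hid : (fun s : ℝ => max s 0 ^ p) =ᶠ[𝓝 r] fun s => s ^ p := by
      filter_upwards [Ioi_mem_nhds hr] with s hs
      rw [max_eq_left hs.le]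
    rw [max_eq_left hr.le]
    exact (Real.hasDerivAt_rpow_const (Or.inl hr.ne')).congr_of_eventuallyEq hid

theorem hasDerivAt_mul_posPart_div_rpow {ε p : ℝ} (hε : 0 < ε) (hp : 1 < p) (r : ℝ) :
    HasDerivAt (fun s => ε / p * ((1 / ε) * max s 0) ^ p) ((max r 0 / ε) ^ (p - 1)) r := by
  have h := ((hasDerivAt_posPart_rpow hp (r / ε)).comp r
    ((hasDerivAt_id r).div_const ε)).const_mul (ε / p)
  have hdiv : ∀ s, max (s / ε) 0 = (1 / ε) * max s 0 := fun s => by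
    rw [← zero_div ε, max_div_div_right hε.le, zero_div, one_div_mul_eq_div]
  simp only [Function.comp_def, id, hdiv] at h
  refine h.congr_deriv ?_
  rw [one_div_mul_eq_div]
  field_simp

theorem HasDerivAt.norm {E : Type*} [NormedAddCommGroup E] [InnerProductSpace ℝ E]
    {f : ℝ → E} {f' : E} {x : ℝ} (hf : HasDerivAt f f' x) (h0 : f x ≠ 0) :
    HasDerivAt (fun y => ‖f y‖) (⟪f x, f'⟫ / ‖f x‖) x := by
  have h := hf.norm_sq.sqrt (by positivity)
  simp only [Real.sqrt_sq (norm_nonneg _)] at h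
  refine h.congr_deriv ?_
  field_simp

section Pointwise

variable {E : Type*} [NormedAddCommGroup E] [InnerProductSpace ℝ E] {ε α' c : ℝ}

noncomputable def nemytskiiIntegrand (ε α' c : ℝ) (v : E) : ℝ :=
  ε / α' * ((1 / ε) * max (‖v‖ - c) 0) ^ α'

/-- At `v = 0` the junk value `‖0‖⁻¹ = 0` gives `0`, which is the true derivative there when
`c ≥ 0`. -/
noncomputable def nemytskiiGrad (ε α' c : ℝ) (v : E) : E :=
  ((max (‖v‖ - c) 0 / ε) ^ (α' - 1)) • (‖v‖⁻¹ • v)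

theorem hasDerivAt_nemytskiiIntegrand_line_zero (hε : 0 < ε) (hα' : 1 < α') (hc : 0 ≤ c)
    (v u : E) :
    HasDerivAt (fun t : ℝ => nemytskiiIntegrand ε α' c (v + t • u))
      ⟪nemytskiiGrad ε α' c v, u⟫ 0 := by
  rcases eq_or_ne v 0 with rfl | hv
  · simp only [nemytskiiGrad, norm_zero, inv_zero, smul_zero, inner_zero_left]
    refine hasDerivAt_zero_of_abs_le_rpow hα' (C := ε / α' * (‖u‖ / ε) ^ α') fun t => ?_
    have hmax : (1 / ε) * max (‖(0 : E) + t • u‖ - c) 0 ≤ ‖u‖ / ε * |t| := by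
      rw [zero_add, norm_smul, Real.norm_eq_abs, one_div_mul_eq_div, div_mul_eq_mul_div,
        mul_comm ‖u‖]
      gcongr
      exact max_le (by linarith) (by positivity)
    have hα'0 : 0 ≤ α' := by linarith
    rw [nemytskiiIntegrand, abs_of_nonneg (by positivity), mul_assoc,
      ← Real.mul_rpow (by positivity) (abs_nonneg t)]
    gcongr
  · have hline : HasDerivAt (fun t : ℝ => v + t • u) u 0 := by
      simpa using ((hasDerivAt_id (0 : ℝ)).smul_const u).const_add v
    have hΦ : HasDerivAt (fun s => ε / α' * ((1 / ε) * max s 0) ^ α')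
        ((max (‖v‖ - c) 0 / ε) ^ (α' - 1)) (‖v + (0 : ℝ) • u‖ - c) := by
      simpa using hasDerivAt_mul_posPart_div_rpow hε hα' (‖v‖ - c)
    have h := hΦ.comp (0 : ℝ) ((hline.norm (by simpa using hv)).sub_const c)
    simp only [zero_smul, add_zero] at h
    refine h.congr_deriv ?_
    rw [nemytskiiGrad, inner_smul_left, inner_smul_left, RCLike.conj_to_real,
      RCLike.conj_to_real, inv_mul_eq_div]

theorem hasDerivAt_nemytskiiIntegrand_line (hε : 0 < ε) (hα' : 1 < α') (hc : 0 ≤ c)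
    (v u : E) (s : ℝ) :
    HasDerivAt (fun t : ℝ => nemytskiiIntegrand ε α' c (v + t • u))
      ⟪nemytskiiGrad ε α' c (v + s • u), u⟫ s := by
  have h := HasDerivAt.comp_sub_const s s (by
    rw [sub_self]; exact hasDerivAt_nemytskiiIntegrand_line_zero hε hα' hc (v + s • u) u)
  refine h.congr_of_eventuallyEq (.of_forall fun t => ?_)
  simp only [add_assoc, ← add_smul, add_sub_cancel]

theorem norm_nemytskiiGrad_le (hε : 0 < ε) (hα' : 1 ≤ α') (hc : 0 ≤ c) (v : E) :
    ‖nemytskiiGrad ε α' c v‖ ≤ (‖v‖ / ε) ^ (α' - 1) := by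
  have hunit : ‖‖v‖⁻¹ • v‖ ≤ 1 := by
    rcases eq_or_ne v 0 with rfl | hv
    · simp
    · exact (norm_smul_inv_norm (𝕜 := ℝ) hv).le
  rw [nemytskiiGrad, norm_smul, Real.norm_of_nonneg (by positivity)]
  calc (max (‖v‖ - c) 0 / ε) ^ (α' - 1) * ‖‖v‖⁻¹ • v‖
      ≤ (max (‖v‖ - c) 0 / ε) ^ (α' - 1) := mul_le_of_le_one_right (by positivity) hunit
    _ ≤ (‖v‖ / ε) ^ (α' - 1) := by
      have hmax : max (‖v‖ - c) 0 ≤ ‖v‖ := max_le (by linarith) (norm_nonneg v)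
      gcongr

theorem abs_inner_nemytskiiGrad_line_le (hε : 0 < ε) (hα' : 1 ≤ α') (hc : 0 ≤ c) (v u : E)
    {s : ℝ} (hs : |s| ≤ 1) :
    |⟪nemytskiiGrad ε α' c (v + s • u), u⟫| ≤ ((‖v‖ + ‖u‖) / ε) ^ (α' - 1) * ‖u‖ := by
  have hnorm : ‖v + s • u‖ ≤ ‖v‖ + ‖u‖ := by
    refine (norm_add_le _ _).trans ?_
    rw [norm_smul, Real.norm_eq_abs]
    gcongr
    exact mul_le_of_le_one_left (norm_nonneg u) hs
  refine (abs_real_inner_le_norm _ _).trans (mul_le_mul_of_nonneg_right ?_ (norm_nonneg u))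
  refine (norm_nemytskiiGrad_le hε hα' hc _).trans ?_
  gcongr

theorem abs_slope_sub_inner_nemytskiiGrad_le (hε : 0 < ε) (hα' : 1 < α') (hc : 0 ≤ c)
    (v u : E) {t : ℝ} (ht : |t| ≤ 1) :
    |(nemytskiiIntegrand ε α' c (v + t • u) - nemytskiiIntegrand ε α' c v) / t
        - ⟪nemytskiiGrad ε α' c v, u⟫| ≤ 2 * (((‖v‖ + ‖u‖) / ε) ^ (α' - 1) * ‖u‖) := by
  set C := ((‖v‖ + ‖u‖) / ε) ^ (α' - 1) * ‖u‖
  have hderiv : |⟪nemytskiiGrad ε α' c v, u⟫| ≤ C := by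
    simpa using abs_inner_nemytskiiGrad_line_le hε hα'.le hc v u (s := 0) (by simp)
  have hmvt := (convex_Icc (-1 : ℝ) 1).norm_image_sub_le_of_norm_hasDerivWithin_le
    (fun s _ => (hasDerivAt_nemytskiiIntegrand_line hε hα' hc v u s).hasDerivWithinAt)
    (fun s hs => abs_inner_nemytskiiGrad_line_le hε hα'.le hc v u (abs_le.mpr hs))
    (by simp : (0 : ℝ) ∈ Set.Icc (-1) 1) (abs_le.mp ht)
  simp only [zero_smul, add_zero, sub_zero, Real.norm_eq_abs] at hmvt
  have hslope : |(nemytskiiIntegrand ε α' c (v + t • u) - nemytskiiIntegrand ε α' c v) / t|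
      ≤ C := by
    rw [abs_div]
    exact div_le_of_le_mul₀ (abs_nonneg t) (by positivity) hmvt
  linarith [abs_sub _ _ |>.trans (add_le_add hslope hderiv)]

end Pointwise

section Integral

variable {X F : Type*} [MeasurableSpace X] {μ : Measure X} [NormedAddCommGroup F]

theorem tendsto_eLpNorm_one_zero_of_dominated {ι : Type*} {l : Filter ι}
    [l.IsCountablyGenerated] {G : ι → X → F} (bound : X → ℝ)
    (hG_meas : ∀ᶠ n in l, AEStronglyMeasurable (G n) μ)
    (h_bound : ∀ᶠ n in l, ∀ᵐ x ∂μ, ‖G n x‖ ≤ bound x) (h_int : Integrable bound μ)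
    (h_lim : ∀ᵐ x ∂μ, Tendsto (fun n => G n x) l (𝓝 0)) :
    Tendsto (fun n => eLpNorm (G n) 1 μ) l (𝓝 0) := by
  simp only [eLpNorm_one_eq_lintegral_enorm]
  have h := tendsto_lintegral_filter_of_dominated_convergence' (μ := μ) (f := fun _ => 0)
    (fun x => ENNReal.ofReal (bound x)) (hG_meas.mono fun n hn => hn.enorm)
    (h_bound.mono fun n hn => hn.mono fun x hx => ?_) h_int.lintegral_lt_top.ne
    (h_lim.mono fun x hx => by simpa using hx.enorm)
  · simpa using h
  · rw [← ofReal_norm]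
    exact ENNReal.ofReal_le_ofReal hx

theorem MeasureTheory.MemLp.div_rpow_sub_one {f : X → F} {α α' : ℝ} (hαα' : α.HolderConjugate α')
    (hf : MemLp f (ENNReal.ofReal α') μ) {ε : ℝ} (hε : 0 ≤ ε) :
    MemLp (fun x => (‖f x‖ / ε) ^ (α' - 1)) (ENNReal.ofReal α) μ := by
  have hexp : ENNReal.ofReal α' / ENNReal.ofReal (α' - 1) = ENNReal.ofReal α := by
    rw [← ENNReal.ofReal_div_of_pos hαα'.symm.sub_one_pos, ← hαα'.symm.conjugate_eq]
  have h := (hf.norm_rpow_div (ENNReal.ofReal (α' - 1))).const_mul (ε ^ (α' - 1))⁻¹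
  rw [ENNReal.toReal_ofReal hαα'.symm.sub_one_pos.le, hexp] at h
  convert h using 2 with x
  rw [Real.div_rpow (norm_nonneg _) hε, div_eq_inv_mul]

end Integral

section Nemytskii

variable {X E : Type*} [MeasurableSpace X] {μ : Measure X} [NormedAddCommGroup E]
  {ε α α' : ℝ} {w : X → ℝ} {p ψ : X → E}

theorem MeasureTheory.AEStronglyMeasurable.nemytskiiIntegrand (hw : AEMeasurable w μ)
    (hp : AEStronglyMeasurable p μ) :
    AEStronglyMeasurable (fun x => nemytskiiIntegrand ε α' (w x) (p x)) μ := by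
  have hmax : AEMeasurable (fun x => max (‖p x‖ - w x) 0) μ :=
    (hp.norm.aemeasurable.sub hw).max aemeasurable_const
  exact ((hmax.const_mul _).pow_const _).const_mul _ |>.aestronglyMeasurable

variable [InnerProductSpace ℝ E]

theorem MeasureTheory.AEStronglyMeasurable.nemytskiiGrad (hw : AEMeasurable w μ)
    (hp : AEStronglyMeasurable p μ) :
    AEStronglyMeasurable (fun x => nemytskiiGrad ε α' (w x) (p x)) μ := by
  have hmax : AEMeasurable (fun x => max (‖p x‖ - w x) 0) μ :=
    (hp.norm.aemeasurable.sub hw).max aemeasurable_const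
  exact ((hmax.div_const _).pow_const _).aestronglyMeasurable.smul
    (hp.norm.aemeasurable.inv.aestronglyMeasurable.smul hp)

theorem memLp_nemytskiiGrad (hαα' : α.HolderConjugate α') (hε : 0 < ε)
    (hw0 : ∀ᵐ x ∂μ, 0 ≤ w x) (hw : AEMeasurable w μ) (hp : MemLp p (ENNReal.ofReal α') μ) :
    MemLp (fun x => nemytskiiGrad ε α' (w x) (p x)) (ENNReal.ofReal α) μ := by
  refine (hp.div_rpow_sub_one hαα' hε.le).of_le (hp.1.nemytskiiGrad hw) ?_
  filter_upwards [hw0] with x hx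
  exact (norm_nemytskiiGrad_le hε hαα'.symm.lt.le hx _).trans (Real.le_norm_self _)

theorem tendsto_eLpNorm_nemytskiiIntegrand_slope_sub_inner (hαα' : α.HolderConjugate α')
    (hε : 0 < ε) (hw0 : ∀ᵐ x ∂μ, 0 ≤ w x) (hw : AEMeasurable w μ)
    (hp : MemLp p (ENNReal.ofReal α') μ) (hψ : MemLp ψ (ENNReal.ofReal α') μ) :
    Tendsto (fun t : ℝ => eLpNorm (fun x =>
        (nemytskiiIntegrand ε α' (w x) (p x + t • ψ x) - nemytskiiIntegrand ε α' (w x) (p x)) / t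
          - ⟪nemytskiiGrad ε α' (w x) (p x), ψ x⟫) 1 μ) (𝓝[≠] 0) (𝓝 0) := by
  have hα' : 1 < α' := hαα'.symm.lt
  have hbound : Integrable (fun x => ((‖p x‖ + ‖ψ x‖) / ε) ^ (α' - 1) * ‖ψ x‖) μ := by
    have h := (hp.norm.add hψ.norm).div_rpow_sub_one hαα' hε.le
    simp only [Pi.add_apply, Real.norm_of_nonneg (add_nonneg (norm_nonneg _) (norm_nonneg _))] at h
    have := hαα'.ennrealOfReal
    exact h.integrable_mul hψ.norm
  have hsmall : ∀ᶠ t : ℝ in 𝓝[≠] 0, |t| ≤ 1 :=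
    ((continuous_abs.tendsto' 0 0 abs_zero).eventually (ge_mem_nhds one_pos)).filter_mono
      nhdsWithin_le_nhds
  refine tendsto_eLpNorm_one_zero_of_dominated _ (.of_forall fun t => ?_)
    (hsmall.mono fun t ht => ?_) (hbound.const_mul 2) ?_
  · have hline : AEStronglyMeasurable (fun x => p x + t • ψ x) μ := hp.1.add (hψ.1.const_smul t)
    exact (((hline.nemytskiiIntegrand (ε := ε) (α' := α') hw).sub
      (hp.1.nemytskiiIntegrand hw)).aemeasurable.div_const t).aestronglyMeasurable.sub
      ((hp.1.nemytskiiGrad hw).inner hψ.1)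
  · filter_upwards [hw0] with x hx
    exact abs_slope_sub_inner_nemytskiiGrad_le hε hα' hx _ _ ht
  · filter_upwards [hw0] with x hx
    have h := (hasDerivAt_nemytskiiIntegrand_line_zero hε hα' hx (p x) (ψ x)).tendsto_slope_zero
    simpa [div_eq_inv_mul] using h.sub_const ⟪nemytskiiGrad ε α' (w x) (p x), ψ x⟫

end Nemytskii

theorem stmt7_general (d : ℕ) (Ω : Set (EuclideanSpace ℝ (Fin d)))
    (hΩ' : MeasurableSet Ω)
    (w : EuclideanSpace ℝ (Fin d) → ℝ) (hw : ContinuousOn w Ω) (hw0 : ∀ x ∈ Ω, 0 ≤ w x)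
    (ε α α' : ℝ) (hε : 0 < ε) (hα : 1 < α)
    (hconj : 1 / α + 1 / α' = 1)
    (p ψ : EuclideanSpace ℝ (Fin d) → EuclideanSpace ℝ (Fin d))
    (hp : MemLp p (ENNReal.ofReal α') (volume.restrict Ω))
    (hψ : MemLp ψ (ENNReal.ofReal α') (volume.restrict Ω)) :
    MemLp (fun x => ((max (‖p x‖ - w x) 0 / ε) ^ (α' - 1)) • (‖p x‖⁻¹ • p x))
        (ENNReal.ofReal α) (volume.restrict Ω)
    ∧ Tendsto (fun t : ℝ =>
        eLpNorm (fun x =>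
          ((ε / α') * ((1 / ε) * max (‖p x + t • ψ x‖ - w x) 0) ^ α'
            - (ε / α') * ((1 / ε) * max (‖p x‖ - w x) 0) ^ α') / t
          - ⟪((max (‖p x‖ - w x) 0 / ε) ^ (α' - 1)) • (‖p x‖⁻¹ • p x), ψ x⟫)
          1 (volume.restrict Ω))
        (nhdsWithin 0 {0}ᶜ) (nhds 0) := by
  have hαα' : α.HolderConjugate α' :=
    Real.holderConjugate_iff.mpr ⟨hα, by simpa only [one_div] using hconj⟩
  have hw0' : ∀ᵐ x ∂volume.restrict Ω, 0 ≤ w x := (ae_restrict_mem hΩ').mono hw0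
  have hwm : AEMeasurable w (volume.restrict Ω) := hw.aemeasurable hΩ'
  exact ⟨memLp_nemytskiiGrad hαα' hε hw0' hwm hp,
    tendsto_eLpNorm_nemytskiiIntegrand_slope_sub_inner hαα' hε hw0' hwm hp hψ⟩

/-- The Nemytskii functional
`𝓕(p)(x) = (ε/α')((1/ε) max{|p(x)| - w(x), 0})^{α'}` mapping `L^{α'}(Ω;ℝ^d) → L¹(Ω)`
is Gateaux differentiable with derivative `ψ ↦ F(p)·ψ`, where
`F(p)(x) = ((|p(x)| - w(x))_+/ε)^{α'-1} p(x)/|p(x)|`, and `F` maps `L^{α'}(Ω;ℝ^d)`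
into `L^α(Ω;ℝ^d)`.  The difference quotients converge in `L¹(Ω)`. -/
theorem stmt7 (d : ℕ) (Ω : Set (EuclideanSpace ℝ (Fin d)))
    (hΩ : IsCompact Ω) (hΩ' : MeasurableSet Ω)
    (w : EuclideanSpace ℝ (Fin d) → ℝ) (hw : ContinuousOn w Ω) (hw0 : ∀ x ∈ Ω, 0 ≤ w x)
    (ε α α' : ℝ) (hε : 0 < ε) (hα : 1 < α) (hαd : α < d / (d - 1))
    (hconj : 1 / α + 1 / α' = 1)
    (p ψ : EuclideanSpace ℝ (Fin d) → EuclideanSpace ℝ (Fin d))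
    (hp : MemLp p (ENNReal.ofReal α') (volume.restrict Ω))
    (hψ : MemLp ψ (ENNReal.ofReal α') (volume.restrict Ω)) :
    MemLp (fun x => ((max (‖p x‖ - w x) 0 / ε) ^ (α' - 1)) • (‖p x‖⁻¹ • p x))
        (ENNReal.ofReal α) (volume.restrict Ω)
    ∧ Tendsto (fun t : ℝ =>
        eLpNorm (fun x =>
          ((ε / α') * ((1 / ε) * max (‖p x + t • ψ x‖ - w x) 0) ^ α'
            - (ε / α') * ((1 / ε) * max (‖p x‖ - w x) 0) ^ α') / t
          - ⟪((max (‖p x‖ - w x) 0 / ε) ^ (α' - 1)) • (‖p x‖⁻¹ • p x), ψ x⟫)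
          1 (volume.restrict Ω))
        (nhdsWithin 0 {0}ᶜ) (nhds 0) :=
  stmt7_general d Ω hΩ' w hw hw0 ε α α' hε hα hconj p ψ hp hψ
end

section
/- Let 𝓖(x,p) := (ε/α')((1/ε)max{|p|-w,0})^{α'} + δ max{|p|, w} + (δ/2) min{|p|²/w, w} with w = w(x) > 0. Then the Fenchel (convex) conjugate of 𝓖(x,·) is 𝓖*(x,q) = |q|²·w/(2δ) - δw if |q| ≤ δ, and 𝓖*(x,q) = (ε/α)(|q|-δ)^α - (3/2)δw + |q|w if |q| > δ. -/
open scoped RealInnerProductSpace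

/-- The integrand `𝓖(x,·) = 𝓕(x,·) + 𝓡(x,·)` of the doubly regularized problem. -/
noncomputable def calG {F : Type*} [NormedAddCommGroup F] (ε α' δ w : ℝ) (p : F) : ℝ :=
  (ε / α') * ((1 / ε) * max (‖p‖ - w) 0) ^ α'
    + δ * max ‖p‖ w + (δ / 2) * min (‖p‖ ^ 2 / w) w

/-- The claimed Fenchel conjugate of `𝓖(x,·)`. -/
noncomputable def calGstar {F : Type*} [NormedAddCommGroup F] (ε α δ w : ℝ) (q : F) : ℝ :=
  if ‖q‖ ≤ δ then ‖q‖ ^ 2 * w / (2 * δ) - δ * w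
  else (ε / α) * (‖q‖ - δ) ^ α - (3 / 2) * (δ * w) + ‖q‖ * w

/-!
Both `𝓖(x,·)` and the claimed conjugate are radial, so by Cauchy–Schwarz the conjugate reduces
to the one-dimensional problem `sup_{r ≥ 0} (s r - g(r))` with `s = |q|` and `𝓖(x,p) = g(|p|)`,
the supremum being attained at `p = (∇ₚ𝓖)⁻¹(q)`, a positive multiple of `q`. In the scalar
problem, for `r ≤ w` the bound is a completed square; for `r ≥ w` and `s > δ` it is Young's
inequality `(s - δ)(r - w) ≤ (ε/α)(s - δ)^α + (ε/α')((r - w)/ε)^{α'}`.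
-/

section Radial

variable {E : Type*} [NormedAddCommGroup E] [InnerProductSpace ℝ E]

theorem iSup_inner_sub_comp_norm_eq (g : ℝ → ℝ) (q : E) {c r : ℝ} (hr : 0 ≤ r)
    (hq : q = 0 → r = 0) (hle : ∀ t, 0 ≤ t → ‖q‖ * t - g t ≤ c)
    (hattain : ‖q‖ * r - g r = c) :
    ⨆ p : E, ⟪q, p⟫ - g ‖p‖ = c := by
  have upper : ∀ p : E, ⟪q, p⟫ - g ‖p‖ ≤ c := fun p ↦
    (sub_le_sub_right (real_inner_le_norm q p) _).trans (hle ‖p‖ (norm_nonneg p))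
  have bdd : BddAbove (Set.range fun p : E ↦ ⟪q, p⟫ - g ‖p‖) :=
    ⟨c, Set.forall_mem_range.2 upper⟩
  refine le_antisymm (ciSup_le upper) ?_
  rcases eq_or_ne q 0 with rfl | hq0
  · obtain rfl := hq rfl
    refine le_ciSup_of_le bdd 0 ?_
    simpa using hattain.ge
  · have hnq : 0 < ‖q‖ := norm_pos_iff.2 hq0
    refine le_ciSup_of_le bdd ((r / ‖q‖) • q) (le_of_eq ?_)
    rw [real_inner_smul_right, real_inner_self_eq_norm_sq, norm_smul, Real.norm_eq_abs,
      abs_of_nonneg (by positivity), div_mul_cancel₀ _ hnq.ne', ← hattain]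
    field_simp

end Radial

/-- The profile `g` with `calG ε α' δ w p = calGRadial ε α' δ w ‖p‖`. -/
noncomputable def calGRadial (ε α' δ w r : ℝ) : ℝ :=
  (ε / α') * ((1 / ε) * max (r - w) 0) ^ α' + δ * max r w + (δ / 2) * min (r ^ 2 / w) w

noncomputable def calGstarRadial (ε α δ w s : ℝ) : ℝ :=
  if s ≤ δ then s ^ 2 * w / (2 * δ) - δ * w
  else (ε / α) * (s - δ) ^ α - (3 / 2) * (δ * w) + s * w

/-- `‖(∇ₚ𝓖)⁻¹(q)‖` as a function of `s = ‖q‖`. -/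
noncomputable def optRadius (ε α δ w s : ℝ) : ℝ :=
  if s ≤ δ then s * w / δ else w + ε * (s - δ) ^ (α - 1)

section Scalar

variable {ε α α' δ w r s : ℝ}

theorem calGRadial_of_le (hw : 0 < w) (hα' : α' ≠ 0) (hr : 0 ≤ r) (hrw : r ≤ w) :
    calGRadial ε α' δ w r = δ * w + δ / 2 * (r ^ 2 / w) := by
  have hsq : r ^ 2 / w ≤ w := by rw [div_le_iff₀ hw]; nlinarith
  rw [calGRadial, max_eq_right (sub_nonpos.2 hrw), max_eq_right hrw, min_eq_left hsq, mul_zero,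
    Real.zero_rpow hα', mul_zero, zero_add]

theorem calGRadial_of_ge (hw : 0 < w) (hrw : w ≤ r) :
    calGRadial ε α' δ w r = ε / α' * ((1 / ε) * (r - w)) ^ α' + δ * r + δ / 2 * w := by
  have hsq : w ≤ r ^ 2 / w := by rw [le_div_iff₀ hw]; nlinarith
  rw [calGRadial, max_eq_left (sub_nonneg.2 hrw), max_eq_left hrw, min_eq_right hsq]

theorem mul_le_div_mul_rpow_add_div_mul_rpow (hε : 0 < ε) (hcj : α.HolderConjugate α')
    {a b : ℝ} (ha : 0 ≤ a) (hb : 0 ≤ b) :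
    a * b ≤ ε / α * a ^ α + ε / α' * ((1 / ε) * b) ^ α' := by
  have young := Real.young_inequality_of_nonneg ha (by positivity : 0 ≤ (1 / ε) * b) hcj
  calc a * b = a * ((1 / ε) * b) * ε := by field_simp
    _ ≤ (a ^ α / α + ((1 / ε) * b) ^ α' / α') * ε := by gcongr
    _ = ε / α * a ^ α + ε / α' * ((1 / ε) * b) ^ α' := by ring

theorem mul_sub_calGRadial_le_of_le (hε : 0 < ε) (hδ : 0 < δ) (hw : 0 < w) (hα' : 1 < α')
    (hsδ : s ≤ δ) (hr : 0 ≤ r) :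
    s * r - calGRadial ε α' δ w r ≤ s ^ 2 * w / (2 * δ) - δ * w := by
  rcases le_total r w with hrw | hrw
  · rw [calGRadial_of_le hw (by positivity) hr hrw]
    suffices s * r - δ / 2 * (r ^ 2 / w) ≤ s ^ 2 * w / (2 * δ) by linarith
    have hsquare : (s * r - δ / 2 * (r ^ 2 / w)) * (2 * δ * w) + (s * w - δ * r) ^ 2
        = s ^ 2 * w / (2 * δ) * (2 * δ * w) := by
      field_simp
      ring
    nlinarith [sq_nonneg (s * w - δ * r), mul_pos hδ hw]
  · rw [calGRadial_of_ge hw hrw]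
    have hF : 0 ≤ ε / α' * ((1 / ε) * (r - w)) ^ α' := by
      have : 0 ≤ (1 / ε) * (r - w) := mul_nonneg (by positivity) (sub_nonneg.2 hrw)
      positivity
    have hsquare : s * w - δ * w / 2 ≤ s ^ 2 * w / (2 * δ) := by
      rw [le_div_iff₀ (by positivity)]
      nlinarith [mul_nonneg (sq_nonneg (s - δ)) hw.le]
    nlinarith [mul_nonneg (sub_nonneg.2 hsδ) (sub_nonneg.2 hrw)]

theorem mul_sub_calGRadial_le_of_gt (hε : 0 < ε) (hδ : 0 < δ) (hw : 0 < w)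
    (hcj : α.HolderConjugate α') (hsδ : δ < s) (hr : 0 ≤ r) :
    s * r - calGRadial ε α' δ w r ≤ ε / α * (s - δ) ^ α - 3 / 2 * (δ * w) + s * w := by
  have hα := hcj.pos
  have hA : 0 ≤ ε / α * (s - δ) ^ α := by
    have : 0 ≤ s - δ := by linarith
    positivity
  rcases le_total r w with hrw | hrw
  · rw [calGRadial_of_le hw hcj.symm.ne_zero hr hrw]
    suffices s * r - δ / 2 * (r ^ 2 / w) ≤ s * w - δ * w / 2 by linarith
    have hfactor : (s * w - δ * w / 2 - (s * r - δ / 2 * (r ^ 2 / w))) * (2 * w)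
        = (w - r) * (2 * s * w - δ * (w + r)) := by
      field_simp
      ring
    have : 0 ≤ (w - r) * (2 * s * w - δ * (w + r)) :=
      mul_nonneg (sub_nonneg.2 hrw) (by nlinarith)
    nlinarith
  · rw [calGRadial_of_ge hw hrw]
    have := mul_le_div_mul_rpow_add_div_mul_rpow hε hcj (sub_nonneg.2 hsδ.le) (sub_nonneg.2 hrw)
    nlinarith

theorem mul_sub_calGRadial_le (hε : 0 < ε) (hδ : 0 < δ) (hw : 0 < w)
    (hcj : α.HolderConjugate α') (hr : 0 ≤ r) :
    s * r - calGRadial ε α' δ w r ≤ calGstarRadial ε α δ w s := by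
  unfold calGstarRadial
  split_ifs with hsδ
  · exact mul_sub_calGRadial_le_of_le hε hδ hw hcj.symm.lt hsδ hr
  · exact mul_sub_calGRadial_le_of_gt hε hδ hw hcj (not_le.1 hsδ) hr

theorem optRadius_nonneg (hε : 0 < ε) (hδ : 0 < δ) (hw : 0 < w) (hs : 0 ≤ s) :
    0 ≤ optRadius ε α δ w s := by
  unfold optRadius
  split_ifs with hsδ
  · positivity
  · have : 0 ≤ s - δ := by linarith
    positivity

theorem optRadius_zero (hδ : 0 < δ) : optRadius ε α δ w 0 = 0 := by
  simp [optRadius, hδ.le]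

theorem mul_optRadius_sub_calGRadial (hε : 0 < ε) (hδ : 0 < δ) (hw : 0 < w)
    (hcj : α.HolderConjugate α') (hs : 0 ≤ s) :
    s * optRadius ε α δ w s - calGRadial ε α' δ w (optRadius ε α δ w s)
      = calGstarRadial ε α δ w s := by
  unfold optRadius calGstarRadial
  split_ifs with hsδ
  · have hrw : s * w / δ ≤ w := by rw [div_le_iff₀ hδ]; nlinarith
    rw [calGRadial_of_le hw hcj.symm.ne_zero (by positivity) hrw]
    field_simp
    ring
  · set a := s - δ
    have ha : 0 < a := sub_pos.2 (not_le.1 hsδ)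
    set t := a ^ (α - 1)
    have ht : 0 < t := Real.rpow_pos_of_pos ha _
    have hpow : t ^ α' = a ^ α := by
      rw [← Real.rpow_mul ha.le, hcj.sub_one_mul_conj]
    have hat : a ^ α = a * t := by
      rw [← Real.rpow_one_add' ha.le (by linarith [hcj.lt]), add_sub_cancel]
    have hinv : 1 / α + 1 / α' = 1 := by simpa [one_div] using hcj.inv_add_inv_eq_one
    rw [calGRadial_of_ge hw (by nlinarith), add_sub_cancel_left,
      show 1 / ε * (ε * t) = t by field_simp, hpow]
    linear_combination (-ε * a ^ α) * hinv - ε * hat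

end Scalar

/-- The Fenchel conjugate of
`𝓖(x,p) = (ε/α')((1/ε) max{|p|-w,0})^{α'} + δ max{|p|,w} + (δ/2) min{|p|²/w, w}`
(with `w = w(x) > 0`) is `𝓖*(x,q) = |q|² w/(2δ) - δw` for `|q| ≤ δ` and
`(ε/α)(|q|-δ)^α - (3/2)δw + |q|w` for `|q| > δ`. -/
theorem stmt8 (d : ℕ) (ε α α' δ w : ℝ) (hε : 0 < ε) (hδ : 0 < δ) (hw : 0 < w)
    (hα : 1 < α) (hconj : α' = α / (α - 1)) (q : EuclideanSpace ℝ (Fin d)) :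
    (⨆ p : EuclideanSpace ℝ (Fin d), (⟪q, p⟫ - calG ε α' δ w p)) = calGstar ε α δ w q := by
  have hcj : α.HolderConjugate α' := hconj ▸ Real.HolderConjugate.conjExponent hα
  have hq := norm_nonneg q
  exact iSup_inner_sub_comp_norm_eq (calGRadial ε α' δ w) q (optRadius_nonneg hε hδ hw hq)
    (fun h ↦ by rw [h, norm_zero, optRadius_zero hδ])
    (fun _ ↦ mul_sub_calGRadial_le hε hδ hw hcj)
    (mul_optRadius_sub_calGRadial hε hδ hw hcj hq)
end

section
/- The map G(x,·) : ℝ^d → ℝ^d defined by G(x,p) = ((|p|-w)_+/ε)^{α'-1}·p/|p| + δp/max{|p|,w} (with w = w(x) > 0) is a bijection of ℝ^d with inverse given by z ↦ z·w/δ if |z| ≤ δ and z ↦ (z/|z|)(ε(|z|-δ)^{α-1} + w) if |z| > δ. -/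
/-- The map `G(x,·) = F(x,·) + R(x,·)` from the regularized optimality system. -/
noncomputable def Gmap {F : Type*} [NormedAddCommGroup F] [NormedSpace ℝ F]
    (ε α' δ w : ℝ) (p : F) : F :=
  ((max (‖p‖ - w) 0 / ε) ^ (α' - 1)) • (‖p‖⁻¹ • p) + (δ / max ‖p‖ w) • p

/-- The claimed inverse of `G(x,·)`. -/
noncomputable def GmapInv {F : Type*} [NormedAddCommGroup F] [NormedSpace ℝ F]
    (ε α δ w : ℝ) (z : F) : F :=
  if ‖z‖ ≤ δ then (w / δ) • z
  else (ε * (‖z‖ - δ) ^ (α - 1) + w) • (‖z‖⁻¹ • z)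

/-!
Both maps are radial: `G(p) = g(|p|) p/|p|` and `G⁻¹(z) = h(|z|) z/|z|` with radial profiles
`g(r) = δ r / w` for `r ≤ w`, `g(r) = ((r - w)/ε)^{α'-1} + δ` for `r > w`, and
`h(s) = w s / δ` for `s ≤ δ`, `h(s) = ε (s - δ)^{α-1} + w` for `s > δ`.
Since `(α' - 1)(α - 1) = 1`, the profiles `g` and `h` are mutually inverse, both pieces of one
matching the corresponding pieces of the other, and a radial map with a positive profile is
inverted by the radial map of the inverse profile.
-/

section Radial

variable {F : Type*} [NormedAddCommGroup F] [NormedSpace ℝ F]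

noncomputable def radialMap (φ : ℝ → ℝ) (p : F) : F := (φ ‖p‖ / ‖p‖) • p

theorem radialMap_zero (φ : ℝ → ℝ) : radialMap φ (0 : F) = 0 := by
  simp [radialMap]

theorem norm_radialMap {φ : ℝ → ℝ} {p : F} (hp : p ≠ 0) (hφ : 0 ≤ φ ‖p‖) :
    ‖radialMap φ p‖ = φ ‖p‖ := by
  have hp' : ‖p‖ ≠ 0 := norm_ne_zero_iff.mpr hp
  rw [radialMap, norm_smul, Real.norm_eq_abs, abs_of_nonneg (by positivity),
    div_mul_cancel₀ _ hp']

theorem radialMap_leftInverse {φ ψ : ℝ → ℝ} (hφ : ∀ r, 0 < r → 0 < φ r)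
    (hψφ : ∀ r, 0 < r → ψ (φ r) = r) :
    Function.LeftInverse (radialMap (F := F) ψ) (radialMap φ) := by
  intro p
  rcases eq_or_ne p 0 with rfl | hp
  · simp only [radialMap_zero]
  have hr : 0 < ‖p‖ := norm_pos_iff.mpr hp
  have hφr := hφ _ hr
  rw [radialMap, norm_radialMap hp hφr.le, hψφ _ hr, radialMap, smul_smul,
    div_mul_div_cancel₀ hφr.ne', div_self hr.ne', one_smul]

end Radial

section Profiles

variable (ε α α' δ w : ℝ)

noncomputable def gmapProfile (r : ℝ) : ℝ :=
  (max (r - w) 0 / ε) ^ (α' - 1) + δ * r / max r w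

noncomputable def gmapInvProfile (s : ℝ) : ℝ :=
  if s ≤ δ then w / δ * s else ε * (s - δ) ^ (α - 1) + w

theorem Gmap_eq_radialMap {F : Type*} [NormedAddCommGroup F] [NormedSpace ℝ F] (p : F) :
    Gmap ε α' δ w p = radialMap (gmapProfile ε α' δ w) p := by
  rcases eq_or_ne p 0 with rfl | hp
  · simp [Gmap, radialMap_zero]
  have hp' : ‖p‖ ≠ 0 := norm_ne_zero_iff.mpr hp
  rw [Gmap, radialMap, gmapProfile, smul_smul, ← add_smul]
  congr 1
  field_simp

theorem GmapInv_eq_radialMap {F : Type*} [NormedAddCommGroup F] [NormedSpace ℝ F] (z : F) :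
    GmapInv ε α δ w z = radialMap (gmapInvProfile ε α δ w) z := by
  rcases eq_or_ne z 0 with rfl | hz
  · simp [GmapInv, radialMap_zero]
  have hz' : ‖z‖ ≠ 0 := norm_ne_zero_iff.mpr hz
  rw [GmapInv, radialMap, gmapInvProfile]
  split_ifs
  · rw [mul_div_assoc, div_self hz', mul_one]
  · rw [smul_smul, div_eq_mul_inv]

variable {ε α α' δ w}

theorem gmapProfile_pos (hε : 0 < ε) (hδ : 0 < δ) {r : ℝ} (hr : 0 < r) : 0 < gmapProfile ε α' δ w r := by
  have hbase : 0 ≤ max (r - w) 0 / ε := div_nonneg (le_max_right _ _) hε.le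
  have hmax : 0 < max r w := lt_max_of_lt_left hr
  unfold gmapProfile
  positivity

theorem gmapInvProfile_pos (hε : 0 < ε) (hδ : 0 < δ) (hw : 0 < w) {s : ℝ} (hs : 0 < s) : 0 < gmapInvProfile ε α δ w s := by
  unfold gmapInvProfile
  split_ifs with hsδ
  · positivity
  · have : 0 < (s - δ) ^ (α - 1) := Real.rpow_pos_of_pos (by linarith) _
    positivity

theorem gmapInvProfile_gmapProfile (hε : 0 < ε) (hδ : 0 < δ) (hw : 0 < w)
    (hexp : (α' - 1) * (α - 1) = 1) (r : ℝ) :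
    gmapInvProfile ε α δ w (gmapProfile ε α' δ w r) = r := by
  have hq : α' - 1 ≠ 0 := left_ne_zero_of_mul_eq_one hexp
  rcases le_or_gt r w with hrw | hrw
  · have hg : gmapProfile ε α' δ w r = δ / w * r := by
      rw [gmapProfile, max_eq_right (by linarith), max_eq_right hrw, zero_div,
        Real.zero_rpow hq]
      ring
    have hle : δ / w * r ≤ δ := by
      calc δ / w * r ≤ δ / w * w := by gcongr
        _ = δ := div_mul_cancel₀ _ hw.ne'
    rw [hg, gmapInvProfile, if_pos hle]
    field_simp
  · have hbase : 0 < (r - w) / ε := div_pos (by linarith) hε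
    have ht : 0 < ((r - w) / ε) ^ (α' - 1) := Real.rpow_pos_of_pos hbase _
    have hg : gmapProfile ε α' δ w r = ((r - w) / ε) ^ (α' - 1) + δ := by
      rw [gmapProfile, max_eq_left (by linarith), max_eq_left hrw.le,
        mul_div_cancel_right₀ _ (by linarith)]
    rw [hg, gmapInvProfile, if_neg (by linarith), add_sub_cancel_right,
      ← Real.rpow_mul hbase.le, hexp, Real.rpow_one]
    field_simp
    ring

theorem gmapProfile_gmapInvProfile (hε : 0 < ε) (hδ : 0 < δ) (hw : 0 < w)
    (hexp : (α' - 1) * (α - 1) = 1) (s : ℝ) :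
    gmapProfile ε α' δ w (gmapInvProfile ε α δ w s) = s := by
  have hq : α' - 1 ≠ 0 := left_ne_zero_of_mul_eq_one hexp
  rcases le_or_gt s δ with hsδ | hsδ
  · have hle : w / δ * s ≤ w := by
      calc w / δ * s ≤ w / δ * δ := by gcongr
        _ = w := div_mul_cancel₀ _ hδ.ne'
    rw [gmapInvProfile, if_pos hsδ, gmapProfile, max_eq_right (by linarith), max_eq_right hle,
      zero_div, Real.zero_rpow hq]
    field_simp
    ring
  · have hbase : 0 < s - δ := by linarith
    have ht : 0 < (s - δ) ^ (α - 1) := Real.rpow_pos_of_pos hbase _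
    have hh : w < ε * (s - δ) ^ (α - 1) + w := by nlinarith
    rw [gmapInvProfile, if_neg hsδ.not_ge, gmapProfile, max_eq_left (by linarith),
      max_eq_left hh.le, mul_div_cancel_right₀ _ (by linarith), add_sub_cancel_right,
      mul_div_cancel_left₀ _ hε.ne', ← Real.rpow_mul hbase.le, mul_comm (α - 1), hexp,
      Real.rpow_one, sub_add_cancel]

theorem leftInverse_GmapInv_Gmap {F : Type*} [NormedAddCommGroup F] [NormedSpace ℝ F]
    (hε : 0 < ε) (hδ : 0 < δ) (hw : 0 < w) (hexp : (α' - 1) * (α - 1) = 1) :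
    Function.LeftInverse (GmapInv (F := F) ε α δ w) (Gmap ε α' δ w) := by
  rw [funext (Gmap_eq_radialMap ε α' δ w), funext (GmapInv_eq_radialMap ε α δ w)]
  exact radialMap_leftInverse (fun _ hr => gmapProfile_pos hε hδ hr)
    (fun r _ => gmapInvProfile_gmapProfile hε hδ hw hexp r)

theorem rightInverse_GmapInv_Gmap {F : Type*} [NormedAddCommGroup F] [NormedSpace ℝ F]
    (hε : 0 < ε) (hδ : 0 < δ) (hw : 0 < w) (hexp : (α' - 1) * (α - 1) = 1) :
    Function.RightInverse (GmapInv (F := F) ε α δ w) (Gmap ε α' δ w) := by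
  rw [funext (Gmap_eq_radialMap ε α' δ w), funext (GmapInv_eq_radialMap ε α δ w)]
  exact radialMap_leftInverse (fun _ hs => gmapInvProfile_pos hε hδ hw hs)
    (fun s _ => gmapProfile_gmapInvProfile hε hδ hw hexp s)

end Profiles

/-- `G(x,p) = ((|p|-w)_+/ε)^{α'-1} p/|p| + δp/max{|p|,w}` (with
`w = w(x) > 0`) is a bijection of `ℝ^d` whose inverse is `z ↦ zw/δ` for `|z| ≤ δ` and
`z ↦ (z/|z|)(ε(|z|-δ)^{α-1} + w)` for `|z| > δ`. -/
theorem stmt9 (d : ℕ) (ε α α' δ w : ℝ) (hε : 0 < ε) (hδ : 0 < δ) (hw : 0 < w)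
    (hα : 1 < α) (hconj : α' = α / (α - 1)) :
    Function.Bijective (Gmap (F := EuclideanSpace ℝ (Fin d)) ε α' δ w)
    ∧ Function.LeftInverse (GmapInv (F := EuclideanSpace ℝ (Fin d)) ε α δ w)
        (Gmap ε α' δ w)
    ∧ Function.RightInverse (GmapInv (F := EuclideanSpace ℝ (Fin d)) ε α δ w)
        (Gmap ε α' δ w) := by
  have hexp : (α' - 1) * (α - 1) = 1 := by
    have : α - 1 ≠ 0 := by linarith
    rw [hconj]
    field_simp
    ring
  have hl := leftInverse_GmapInv_Gmap (F := EuclideanSpace ℝ (Fin d)) hε hδ hw hexp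
  have hr := rightInverse_GmapInv_Gmap (F := EuclideanSpace ℝ (Fin d)) hε hδ hw hexp
  exact ⟨⟨hl.injective, hr.surjective⟩, hl, hr⟩
end
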